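/- (Existence of the Hermite–Jacobi action via the exact Egorov identity.) Let h : ℤ^g × ℤ^g → ℤ^g × ℤ^g be a group automorphism preserving the standard symplectic form ω((p,q),(p',q')) = Σ_{j=1}^g (p_j q'_j − q_j p'_j). Then there exists a unitary operator ρ(h) : V → V such that ρ(h) ∘ O_{pq} ∘ ρ(h)⁻¹ = O_{h(p,q)} for all p, q ∈ ℤ^g, where O_{h(p,q)} denotes the operator O_{p'q'} with (p',q') = h(p,q). -/

import Mathlib

open Finset

/-- The underlying `ℤ^g × ℤ^g` of the Heisenberg group. -/
abbrev HVec (g : ℕ) := (Fin g → ℤ) × (Fin g → ℤ)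

/-- The standard symplectic form `ω((p,q),(p',q')) = Σⱼ (pⱼ q'ⱼ − qⱼ p'ⱼ)`. -/
def symp (g : ℕ) (x y : HVec g) : ℤ := ∑ j, (x.1 j * y.2 j - x.2 j * y.1 j)

lemma symp_add_left (g : ℕ) (x y z : HVec g) :
    symp g (x + y) z = symp g x z + symp g y z := by
  simp only [symp, Prod.fst_add, Prod.snd_add, Pi.add_apply]
  rw [← Finset.sum_add_distrib]
  exact Finset.sum_congr rfl fun j _ => by ring

lemma symp_add_right (g : ℕ) (x y z : HVec g) :
    symp g x (y + z) = symp g x y + symp g x z := by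
  simp only [symp, Prod.fst_add, Prod.snd_add, Pi.add_apply]
  rw [← Finset.sum_add_distrib]
  exact Finset.sum_congr rfl fun j _ => by ring

lemma symp_zero_left (g : ℕ) (y : HVec g) : symp g 0 y = 0 := by
  simp [symp]

lemma symp_zero_right (g : ℕ) (x : HVec g) : symp g x 0 = 0 := by
  simp [symp]

lemma symp_neg_left (g : ℕ) (x y : HVec g) : symp g (-x) y = - symp g x y := by
  simp only [symp, Prod.fst_neg, Prod.snd_neg, Pi.neg_apply, ← Finset.sum_neg_distrib]
  exact Finset.sum_congr rfl fun j _ => by ring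

lemma symp_neg_right (g : ℕ) (x y : HVec g) : symp g x (-y) = - symp g x y := by
  simp only [symp, Prod.fst_neg, Prod.snd_neg, Pi.neg_apply, ← Finset.sum_neg_distrib]
  exact Finset.sum_congr rfl fun j _ => by ring

lemma symp_self (g : ℕ) (x : HVec g) : symp g x x = 0 :=
  Finset.sum_eq_zero fun j _ => by ring

lemma symp_skew (g : ℕ) (x y : HVec g) : symp g x y = - symp g y x := by
  simp only [symp, ← Finset.sum_neg_distrib]
  exact Finset.sum_congr rfl fun j _ => by ring

lemma symp_smul_left (g : ℕ) (c : ℤ) (x y : HVec g) :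
    symp g (c • x) y = c * symp g x y := by
  simp only [symp, Prod.smul_fst, Prod.smul_snd, Pi.smul_apply, smul_eq_mul, Finset.mul_sum]
  exact Finset.sum_congr rfl fun j _ => by ring

lemma symp_smul_right (g : ℕ) (c : ℤ) (x y : HVec g) :
    symp g x (c • y) = c * symp g x y := by
  simp only [symp, Prod.smul_fst, Prod.smul_snd, Pi.smul_apply, smul_eq_mul, Finset.mul_sum]
  exact Finset.sum_congr rfl fun j _ => by ring

/-- The integral Heisenberg group `H(ℤ^g) = ℤ^g × ℤ^g × ℤ`. -/
def Heis (g : ℕ) := HVec g × ℤ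

namespace Heis

variable {g : ℕ}

instance : Mul (Heis g) := ⟨fun a b => (a.1 + b.1, a.2 + b.2 + symp g a.1 b.1)⟩
instance : One (Heis g) := ⟨((0 : HVec g), (0 : ℤ))⟩
instance : Inv (Heis g) := ⟨fun a => (-a.1, -a.2)⟩

lemma mul_def (a b : Heis g) : a * b = (a.1 + b.1, a.2 + b.2 + symp g a.1 b.1) := rfl
lemma one_def : (1 : Heis g) = ((0 : HVec g), (0 : ℤ)) := rfl
lemma inv_def (a : Heis g) : a⁻¹ = (-a.1, -a.2) := rfl

instance : Group (Heis g) where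
  mul_assoc a b c := by
    show ((a.1 + b.1) + c.1, (a.2 + b.2 + symp g a.1 b.1) + c.2 + symp g (a.1 + b.1) c.1) =
      (a.1 + (b.1 + c.1), a.2 + (b.2 + c.2 + symp g b.1 c.1) + symp g a.1 (b.1 + c.1))
    refine Prod.ext ?_ ?_
    · simp [add_assoc]
    · simp only [symp_add_left, symp_add_right]
      ring
  one_mul a := by
    show ((0 : HVec g) + a.1, (0 : ℤ) + a.2 + symp g 0 a.1) = a
    refine Prod.ext ?_ ?_ <;> simp [symp_zero_left]
  mul_one a := by
    show (a.1 + (0 : HVec g), a.2 + (0 : ℤ) + symp g a.1 0) = a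
    refine Prod.ext ?_ ?_ <;> simp [symp_zero_right]
  inv_mul_cancel a := by
    show (-a.1 + a.1, -a.2 + a.2 + symp g (-a.1) a.1) = ((0 : HVec g), (0 : ℤ))
    refine Prod.ext ?_ ?_ <;> simp [symp_neg_left, symp_self]

end Heis

/-- The normal subgroup `Γ_N = {(Np, Nq, 2Nk)}` of `H(ℤ^g)`. -/
def GammaN (g N : ℕ) (hN : Even N) : Subgroup (Heis g) where
  carrier := {a | (∃ x : HVec g, a.1 = (N : ℤ) • x) ∧ ∃ k : ℤ, a.2 = 2 * N * k}
  one_mem' := ⟨⟨0, by simp [Heis.one_def]⟩, 0, by simp [Heis.one_def]⟩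
  mul_mem' := by
    rintro a b ⟨⟨x, hx⟩, k, hk⟩ ⟨⟨y, hy⟩, l, hl⟩
    obtain ⟨m, hm⟩ := hN
    have hNm : (N : ℤ) = m + m := by exact_mod_cast hm
    refine ⟨⟨x + y, ?_⟩, k + l + m * symp g x y, ?_⟩
    · simp [Heis.mul_def, hx, hy, smul_add]
    · simp only [Heis.mul_def, hx, hy, hk, hl, symp_smul_left, symp_smul_right]
      rw [hNm]; ring
  inv_mem' := by
    rintro a ⟨⟨x, hx⟩, k, hk⟩
    exact ⟨⟨-x, by simp [Heis.inv_def, hx]⟩, -k, by simp [Heis.inv_def, hk]⟩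

instance gammaN_normal (g N : ℕ) (hN : Even N) : (GammaN g N hN).Normal := by
  constructor
  intro n hn x
  obtain ⟨⟨y, hy⟩, k, hk⟩ := hn
  refine ⟨⟨y, ?_⟩, k + symp g x.1 y, ?_⟩
  · show x.1 + n.1 + -x.1 = (N : ℤ) • y
    rw [hy]; abel
  · show x.2 + n.2 + symp g x.1 n.1 + -x.2 + symp g (x.1 + n.1) (-x.1) = 2 * N * (k + symp g x.1 y)
    simp only [Heis.mul_def, Heis.inv_def, hy, hk, symp_add_left, symp_neg_right, symp_self,
      symp_smul_left, symp_smul_right]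
    have h1 : symp g y x.1 = - symp g x.1 y := symp_skew g y x.1
    rw [h1]; ring

noncomputable section

/-- The Hilbert space `V` of functions `(ℤ_N)^g → ℂ` with its standard inner product. -/
abbrev ThetaSp (g N : ℕ) [NeZero N] := EuclideanSpace ℂ (Fin g → ZMod N)

/-- The standard orthonormal basis `(e_μ)` of `V`, `μ ∈ (ℤ_N)^g`,
with `e_μ = EuclideanSpace.single μ 1`. -/
def thetaBasis (g N : ℕ) [NeZero N] : Module.Basis (Fin g → ZMod N) ℂ (ThetaSp g N) :=
  (EuclideanSpace.basisFun (Fin g → ZMod N) ℂ).toBasis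

/-- The coefficient `exp(−(πi/N) pᵀq − (2πi/N) μᵀq)`, where `μᵀq` is computed using the
canonical lift `ZMod.val` of `μ` to `ℤ^g`. -/
def schCoeff (g N : ℕ) [NeZero N] (p q : Fin g → ℤ) (μ : Fin g → ZMod N) : ℂ :=
  Complex.exp (-((Real.pi : ℂ) * Complex.I / N) * (∑ j, (p j : ℂ) * (q j : ℂ))
    - (2 * (Real.pi : ℂ) * Complex.I / N) * (∑ j, ((μ j).val : ℂ) * (q j : ℂ)))

/-- The operator `O_{pq}` on `V`, determined by its action on the standard basis:
`O_{pq} e_μ = exp(−(πi/N) pᵀq − (2πi/N) μᵀq) • e_{μ+p}`. -/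
def Opq (g N : ℕ) [NeZero N] (p q : Fin g → ℤ) : ThetaSp g N →L[ℂ] ThetaSp g N :=
  LinearMap.toContinuousLinearMap <|
    (thetaBasis g N).constr ℂ fun μ =>
      schCoeff g N p q μ • EuclideanSpace.single (μ + fun j => ((p j : ZMod N))) (1 : ℂ)


/-!
Since `h` preserves `ω`, the operators `W x = O_{h x}` satisfy the same Weyl relations
`W x W y = exp(πi ω(x,y)/N) W(x+y)`, `W(Nv) = 1` as the `O_x`, so it suffices to prove a
Stone–von Neumann uniqueness theorem at level `N`. For such a unitary family `W` on a space of
dimension `N^g`, averaging the commuting unitaries `W(0,b)`, `b ∈ (ℤ_N)^g`, gives the projection `P`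
onto their common fixed vectors. Character orthogonality on `(ℤ_N)^g` gives `P W(a,0) P = δ_{a0} P`
and `∑_a W(a,0) P W(a,0)⁻¹ = 1`, so `P ≠ 0`; for a unit vector `f = P f` the vectors `W(μ,0) f`
form an orthonormal basis on which `W x` acts by the formula defining `O_x e_μ`, and
`e_μ ↦ W(μ,0) f` is the required unitary.
-/

open scoped InnerProductSpace Matrix

def phase (N : ℕ) (m : ℤ) : ℂ := Complex.exp (Real.pi * Complex.I / N * m)

lemma phase_add (N : ℕ) (a b : ℤ) : phase N (a + b) = phase N a * phase N b := by
  rw [phase, phase, phase, ← Complex.exp_add]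
  push_cast
  ring_nf

@[simp]
lemma phase_zero (N : ℕ) : phase N 0 = 1 := by simp [phase]

lemma phase_eq_of_dvd {N : ℕ} [NeZero N] {a b : ℤ} (h : 2 * (N : ℤ) ∣ a - b) :
    phase N a = phase N b := by
  obtain ⟨k, hk⟩ := h
  rw [show a = b + k * (2 * N) by linarith, phase_add]
  convert mul_one (phase N b)
  rw [phase, ← Complex.exp_int_mul_two_pi_mul_I k]
  congr 1
  push_cast
  field_simp [NeZero.ne N]

lemma phase_sum {ι : Type*} (N : ℕ) (s : Finset ι) (f : ι → ℤ) :
    phase N (∑ i ∈ s, f i) = ∏ i ∈ s, phase N (f i) := by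
  simp only [phase, Int.cast_sum, Finset.mul_sum, Complex.exp_sum]

lemma star_phase (N : ℕ) (m : ℤ) : starRingEnd ℂ (phase N m) = phase N (-m) := by
  rw [phase, phase, ← Complex.exp_conj]
  simp [Complex.conj_ofReal]
  ring_nf

lemma phase_two_mul (N : ℕ) [NeZero N] (m : ℤ) :
    phase N (2 * m) = ZMod.stdAddChar (m : ZMod N) := by
  rw [ZMod.stdAddChar_coe, phase]
  push_cast
  ring_nf

variable {g N : ℕ}

lemma symp_eq_dotProduct (x y : HVec g) : symp g x y = x.1 ⬝ᵥ y.2 - x.2 ⬝ᵥ y.1 := by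
  simp [symp, dotProduct]

variable (N) in
def modN : (Fin g → ℤ) →+ (Fin g → ZMod N) := (Int.castAddHom (ZMod N)).compLeft (Fin g)

@[simp]
lemma modN_apply (p : Fin g → ℤ) (j : Fin g) : modN N p j = (p j : ZMod N) := rfl

lemma modN_eq_zero_iff (p : Fin g → ℤ) : modN N p = 0 ↔ ∀ j, (N : ℤ) ∣ p j := by
  simp [funext_iff, ZMod.intCast_zmod_eq_zero_iff_dvd]

lemma exists_eq_add_smul_of_modN_eq {p p' : Fin g → ℤ} (h : modN N p = modN N p') :
    ∃ d, p = p' + (N : ℤ) • d := by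
  have hdvd := (modN_eq_zero_iff (N := N) (p - p')).1 (by rw [map_sub, h, sub_self])
  choose d hd using hdvd
  exact ⟨d, funext fun j => by simp [← hd j]⟩

def liftZ (μ : Fin g → ZMod N) : Fin g → ℤ := fun j => (μ j).val

@[simp]
lemma liftZ_zero : liftZ (0 : Fin g → ZMod N) = 0 := by
  ext j
  simp [liftZ]

/-- A unitary representation of `H(ℤ^g) / Γ_N` on which the centre acts through `phase N`;
`W x` is the image of `(x, 0)`. -/
structure IsWeylSystem (N : ℕ) {E : Type*} [NormedAddCommGroup E] [InnerProductSpace ℂ E]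
    (W : HVec g → E →L[ℂ] E) : Prop where
  map_mul : ∀ x y, W x * W y = phase N (symp g x y) • W (x + y)
  map_smul_eq_one : ∀ v : HVec g, W ((N : ℤ) • v) = 1
  inner_map_map : ∀ x u v, ⟪W x u, W x v⟫_ℂ = ⟪u, v⟫_ℂ

namespace IsWeylSystem

variable {E : Type*} [NormedAddCommGroup E] [InnerProductSpace ℂ E] {W : HVec g → E →L[ℂ] E}

lemma comp_symplectic (hW : IsWeylSystem N W) (h : HVec g →+ HVec g)
    (hsymp : ∀ x y, symp g (h x) (h y) = symp g x y) : IsWeylSystem N (W ∘ h) where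
  map_mul x y := by simp only [Function.comp_apply, hW.map_mul, hsymp, map_add]
  map_smul_eq_one v := by simp only [Function.comp_apply, map_zsmul, hW.map_smul_eq_one]
  inner_map_map x := hW.inner_map_map (h x)

lemma map_zero (hW : IsWeylSystem N W) : W 0 = 1 := by
  simpa using hW.map_smul_eq_one 0

lemma mul_neg_self (hW : IsWeylSystem N W) (x : HVec g) : W x * W (-x) = 1 := by
  rw [hW.map_mul, symp_neg_right, symp_self, neg_zero, phase_zero, one_smul, add_neg_cancel,
    hW.map_zero]

lemma inner_map_left (hW : IsWeylSystem N W) (x : HVec g) (u v : E) :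
    ⟪W x u, v⟫_ℂ = ⟪u, W (-x) v⟫_ℂ := by
  have hv : W x (W (-x) v) = v := by
    rw [← mul_apply_eq_comp, hW.mul_neg_self, one_apply_eq_self]
  calc ⟪W x u, v⟫_ℂ = ⟪W x u, W x (W (-x) v)⟫_ℂ := by rw [hv]
    _ = ⟪u, W (-x) v⟫_ℂ := hW.inner_map_map _ _ _

lemma map_mul_comm (hW : IsWeylSystem N W) (x y : HVec g) :
    W x * W y = phase N (2 * symp g x y) • (W y * W x) := by
  rw [hW.map_mul x y, hW.map_mul y x, smul_smul, ← phase_add, symp_skew g y x, add_comm y x]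
  congr 2
  ring

lemma map_add_smul (hW : IsWeylSystem N W) {x v : HVec g} (hs : symp g x v = 0) :
    W (x + (N : ℤ) • v) = W x := by
  have h := hW.map_mul x ((N : ℤ) • v)
  rwa [hW.map_smul_eq_one, mul_one, symp_smul_right, hs, mul_zero, phase_zero, one_smul,
    eq_comm] at h

lemma map_fst_congr (hW : IsWeylSystem N W) {p p' : Fin g → ℤ} (h : modN N p = modN N p') :
    W (p, 0) = W (p', 0) := by
  obtain ⟨d, rfl⟩ := exists_eq_add_smul_of_modN_eq h
  convert hW.map_add_smul (x := (p', 0)) (v := (d, 0)) (by simp [symp_eq_dotProduct]) using 2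
  ext <;> simp

lemma map_snd_congr (hW : IsWeylSystem N W) {q q' : Fin g → ℤ} (h : modN N q = modN N q') :
    W (0, q) = W (0, q') := by
  obtain ⟨d, rfl⟩ := exists_eq_add_smul_of_modN_eq h
  convert hW.map_add_smul (x := (0, q')) (v := (0, d)) (by simp [symp_eq_dotProduct]) using 2
  ext <;> simp

lemma map_eq_smul_mul (hW : IsWeylSystem N W) (p q : Fin g → ℤ) :
    W (p, q) = phase N (-(p ⬝ᵥ q)) • (W (p, 0) * W (0, q)) := by
  rw [hW.map_mul, smul_smul, ← phase_add, symp_eq_dotProduct]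
  simp

end IsWeylSystem

section

variable [NeZero N] {E : Type*} [NormedAddCommGroup E] [InnerProductSpace ℂ E]
  {W : HVec g → E →L[ℂ] E}

@[simp]
lemma modN_liftZ (μ : Fin g → ZMod N) : modN N (liftZ μ) = μ := by
  ext j
  simp [liftZ]

lemma sum_phase_two_mul_dotProduct (c : Fin g → ℤ) :
    ∑ q : Fin g → ZMod N, phase N (2 * (liftZ q ⬝ᵥ c)) =
      if modN N c = 0 then (N : ℂ) ^ g else 0 := by
  classical
  have hterm : ∀ q : Fin g → ZMod N,
      phase N (2 * (liftZ q ⬝ᵥ c)) = ∏ j, ZMod.stdAddChar (q j * (c j : ZMod N)) := by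
    intro q
    rw [dotProduct, Finset.mul_sum, phase_sum]
    refine Finset.prod_congr rfl fun j _ => ?_
    rw [phase_two_mul]
    simp [liftZ]
  simp_rw [hterm]
  rw [← Fintype.prod_sum (fun j a => ZMod.stdAddChar (a * (c j : ZMod N)))]
  simp [AddChar.sum_mulShift _ (ZMod.isPrimitive_stdAddChar N), Finset.prod_ite_zero, funext_iff]

lemma thetaBasis_apply (μ : Fin g → ZMod N) :
    thetaBasis g N μ = EuclideanSpace.single μ 1 := by
  simp [thetaBasis, EuclideanSpace.basisFun_apply]

lemma ThetaSp.continuousLinearMap_ext {T S : ThetaSp g N →L[ℂ] E}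
    (h : ∀ μ, T (EuclideanSpace.single μ 1) = S (EuclideanSpace.single μ 1)) : T = S :=
  ContinuousLinearMap.coe_injective <| (thetaBasis g N).ext fun μ => by
    simpa [thetaBasis_apply] using h μ

variable (g N) in
def schOp (x : HVec g) : ThetaSp g N →L[ℂ] ThetaSp g N := Opq g N x.1 x.2

lemma schCoeff_eq_phase (p q : Fin g → ℤ) (μ : Fin g → ZMod N) :
    schCoeff g N p q μ = phase N (-(p ⬝ᵥ q + 2 * (liftZ μ ⬝ᵥ q))) := by
  rw [schCoeff, phase]
  congr 1
  push_cast [dotProduct, liftZ]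
  ring

lemma schOp_single (x : HVec g) (μ : Fin g → ZMod N) :
    schOp g N x (EuclideanSpace.single μ 1) =
      schCoeff g N x.1 x.2 μ • EuclideanSpace.single (μ + modN N x.1) 1 := by
  rw [schOp, Opq, ← thetaBasis_apply, LinearMap.coe_toContinuousLinearMap',
    Module.Basis.constr_basis]
  rfl

lemma schOp_mul (x y : HVec g) :
    schOp g N x * schOp g N y = phase N (symp g x y) • schOp g N (x + y) := by
  refine ThetaSp.continuousLinearMap_ext fun μ => ?_
  simp only [mul_apply_eq_comp, smul_apply, schOp_single, map_smul, smul_smul, Prod.fst_add,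
    map_add, add_assoc, add_comm (modN N y.1)]
  congr 1
  -- `liftZ (μ + p)` is `liftZ μ + p` up to `N • d`, which the phase only sees through `2 N`.
  obtain ⟨d, hd⟩ := exists_eq_add_smul_of_modN_eq (N := N)
    (p := liftZ (μ + modN N y.1)) (p' := liftZ μ + y.1) (by simp)
  simp only [schCoeff_eq_phase, ← phase_add, symp_eq_dotProduct, hd]
  refine phase_eq_of_dvd ⟨-(d ⬝ᵥ x.2), ?_⟩
  simp only [Prod.snd_add, add_dotProduct, dotProduct_add, smul_dotProduct, smul_eq_mul,
    dotProduct_comm y.1 x.2]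
  ring

lemma schOp_smul_eq_one (hN : Even N) (v : HVec g) : schOp g N ((N : ℤ) • v) = 1 := by
  refine ThetaSp.continuousLinearMap_ext fun μ => ?_
  obtain ⟨m, hm⟩ := hN
  have hcoeff : schCoeff g N ((N : ℤ) • v).1 ((N : ℤ) • v).2 μ = 1 := by
    rw [schCoeff_eq_phase, ← phase_zero N]
    refine phase_eq_of_dvd ⟨-(m * (v.1 ⬝ᵥ v.2) + liftZ μ ⬝ᵥ v.2), ?_⟩
    simp only [Prod.smul_fst, Prod.smul_snd, smul_dotProduct, dotProduct_smul, smul_eq_mul]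
    push_cast [hm]
    ring
  have hshift : modN N ((N : ℤ) • v).1 = 0 := by
    ext j
    simp
  rw [schOp_single, hcoeff, hshift, add_zero, one_smul, one_apply_eq_self]

lemma schOp_inner_map_map (x : HVec g) (u v : ThetaSp g N) :
    ⟪schOp g N x u, schOp g N x v⟫_ℂ = ⟪u, v⟫_ℂ := by
  have hon : Orthonormal ℂ (thetaBasis g N) := by
    simp [thetaBasis]
  have himg : Orthonormal ℂ (schOp g N x ∘ thetaBasis g N) := by
    classical
    rw [orthonormal_iff_ite]
    intro μ ν
    simp only [Function.comp_apply, thetaBasis_apply, schOp_single, inner_smul_left,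
      inner_smul_right, EuclideanSpace.inner_single_left, schCoeff_eq_phase,
      PiLp.single_apply, add_left_inj, map_one, one_mul]
    split_ifs with hμν
    · rw [hμν, star_phase, mul_one, ← phase_add, add_neg_cancel, phase_zero]
    · simp
  exact (LinearMap.isometryOfOrthonormal (schOp g N x : ThetaSp g N →ₗ[ℂ] ThetaSp g N) hon
    himg).inner_map_map u v

lemma isWeylSystem_schOp (hN : Even N) : IsWeylSystem N (schOp g N) :=
  ⟨schOp_mul, schOp_smul_eq_one hN, schOp_inner_map_map⟩

variable (N W) in
def weylProj : E →L[ℂ] E := ((N : ℂ) ^ g)⁻¹ • ∑ q : Fin g → ZMod N, W (0, liftZ q)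

lemma weylProj_mul (T : E →L[ℂ] E) :
    weylProj N W * T = ((N : ℂ) ^ g)⁻¹ • ∑ q : Fin g → ZMod N, W (0, liftZ q) * T := by
  rw [weylProj, smul_mul_assoc, Finset.sum_mul]

namespace IsWeylSystem

lemma map_snd_mul_weylProj (hW : IsWeylSystem N W) (b : Fin g → ℤ) :
    W (0, b) * weylProj N W = weylProj N W := by
  have hterm : ∀ q, W (0, b) * W (0, liftZ q) = W (0, liftZ (modN N b + q)) := fun q => by
    rw [hW.map_mul, symp_eq_dotProduct]
    simpa using hW.map_snd_congr (q := b + liftZ q) (by simp)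
  rw [weylProj, mul_smul_comm, Finset.mul_sum]
  simp_rw [hterm]
  congr 1
  exact Fintype.sum_equiv (Equiv.addLeft (modN N b)) _ _ fun _ => rfl

lemma weylProj_mul_self (hW : IsWeylSystem N W) : weylProj N W * weylProj N W = weylProj N W := by
  simp only [weylProj_mul, hW.map_snd_mul_weylProj, Finset.sum_const, Finset.card_univ,
    Fintype.card_fun, ZMod.card, Fintype.card_fin]
  rw [← Nat.cast_smul_eq_nsmul ℂ, smul_smul, Nat.cast_pow, inv_mul_cancel₀ (by simp [NeZero.ne N]),
    one_smul]

lemma inner_weylProj_left (hW : IsWeylSystem N W) (u v : E) :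
    ⟪weylProj N W u, v⟫_ℂ = ⟪u, weylProj N W v⟫_ℂ := by
  have hterm : ∀ q : Fin g → ZMod N,
      ⟪W (0, liftZ q) u, v⟫_ℂ = ⟪u, W (0, liftZ (-q)) v⟫_ℂ := fun q => by
    rw [hW.inner_map_left, Prod.neg_mk, neg_zero, hW.map_snd_congr (q' := liftZ (-q)) (by simp)]
  simp only [weylProj, smul_apply, _root_.sum_apply, inner_smul_left, inner_smul_right, sum_inner,
    inner_sum, hterm]
  congr 1
  · simp
  · exact Fintype.sum_equiv (Equiv.neg _) _ _ fun _ => by simp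

lemma map_mul_map_fst_mul_weylProj (hW : IsWeylSystem N W) (x : HVec g) (μ : Fin g → ZMod N) :
    W x * (W (liftZ μ, 0) * weylProj N W) =
      schCoeff g N x.1 x.2 μ • (W (liftZ (μ + modN N x.1), 0) * weylProj N W) := by
  obtain ⟨p, q⟩ := x
  rw [← mul_assoc, hW.map_mul, Prod.mk_add_mk, add_zero, hW.map_eq_smul_mul, smul_smul,
    smul_mul_assoc, mul_assoc, hW.map_snd_mul_weylProj,
    hW.map_fst_congr (p' := liftZ (μ + modN N p)) (by simp [add_comm]), schCoeff_eq_phase,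
    ← phase_add, symp_eq_dotProduct]
  congr 2
  simp only [dotProduct_zero, add_dotProduct, dotProduct_comm q]
  ring

lemma weylProj_mul_map_fst_mul_weylProj (hW : IsWeylSystem N W) (κ : Fin g → ZMod N) :
    weylProj N W * (W (liftZ κ, 0) * weylProj N W) = if κ = 0 then weylProj N W else 0 := by
  have hterm : ∀ q : Fin g → ZMod N, W (0, liftZ q) * (W (liftZ κ, 0) * weylProj N W) =
      phase N (2 * (liftZ q ⬝ᵥ -liftZ κ)) • (W (liftZ κ, 0) * weylProj N W) := fun q => by
    rw [← mul_assoc, hW.map_mul_comm, smul_mul_assoc, mul_assoc, hW.map_snd_mul_weylProj,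
      symp_eq_dotProduct]
    simp
  simp only [weylProj_mul, hterm, ← Finset.sum_smul, sum_phase_two_mul_dotProduct, map_neg,
    modN_liftZ, neg_eq_zero]
  split_ifs with hκ
  · subst hκ
    rw [smul_smul, inv_mul_cancel₀ (by simp [NeZero.ne N]), one_smul, liftZ_zero,
      Prod.mk_zero_zero, hW.map_zero, one_mul]
  · simp

lemma sum_map_fst_mul_weylProj_mul (hW : IsWeylSystem N W) :
    ∑ κ : Fin g → ZMod N, W (liftZ κ, 0) * weylProj N W * W (-liftZ κ, 0) = 1 := by
  have hconj : ∀ a b : Fin g → ℤ,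
      W (a, 0) * W (0, b) * W (-a, 0) = phase N (2 * (a ⬝ᵥ b)) • W (0, b) := fun a b => by
    rw [hW.map_mul_comm, smul_mul_assoc, mul_assoc, ← neg_zero, ← Prod.neg_mk, neg_zero,
      hW.mul_neg_self, mul_one, symp_eq_dotProduct]
    simp
  have hconjP : ∀ a : Fin g → ℤ, W (a, 0) * weylProj N W * W (-a, 0) =
      ((N : ℂ) ^ g)⁻¹ • ∑ q : Fin g → ZMod N, phase N (2 * (a ⬝ᵥ liftZ q)) • W (0, liftZ q) :=
    fun a => by
      rw [weylProj, mul_smul_comm, smul_mul_assoc, Finset.mul_sum, Finset.sum_mul]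
      simp_rw [hconj]
  simp_rw [hconjP]
  rw [← Finset.smul_sum, Finset.sum_comm]
  simp_rw [← Finset.sum_smul, sum_phase_two_mul_dotProduct, modN_liftZ, ite_smul, zero_smul]
  rw [Finset.sum_ite_eq' Finset.univ, if_pos (Finset.mem_univ _), smul_smul,
    inv_mul_cancel₀ (by simp [NeZero.ne N]), one_smul, liftZ_zero, Prod.mk_zero_zero, hW.map_zero]

lemma weylProj_ne_zero [Nontrivial E] (hW : IsWeylSystem N W) : weylProj N W ≠ 0 := by
  intro h0
  simpa [h0] using hW.sum_map_fst_mul_weylProj_mul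

lemma exists_norm_eq_one_weylProj_apply [Nontrivial E] (hW : IsWeylSystem N W) :
    ∃ f : E, ‖f‖ = 1 ∧ weylProj N W f = f := by
  obtain ⟨u, hu⟩ : ∃ u, weylProj N W u ≠ 0 := by
    by_contra! h
    exact hW.weylProj_ne_zero (ContinuousLinearMap.ext h)
  refine ⟨(‖weylProj N W u‖⁻¹ : ℂ) • weylProj N W u, norm_smul_inv_norm hu, ?_⟩
  rw [map_smul, ← mul_apply_eq_comp, hW.weylProj_mul_self]

lemma orthonormal_map_fst {f : E} (hW : IsWeylSystem N W) (hf₁ : ‖f‖ = 1)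
    (hf : weylProj N W f = f) : Orthonormal ℂ fun μ : Fin g → ZMod N => W (liftZ μ, 0) f := by
  classical
  rw [orthonormal_iff_ite]
  intro μ ν
  have hA : W (-liftZ μ, 0) * W (liftZ ν, 0) = W (liftZ (ν - μ), 0) := by
    rw [hW.map_mul, symp_eq_dotProduct]
    simpa using hW.map_fst_congr (by simp [sub_eq_neg_add])
  calc ⟪W (liftZ μ, 0) f, W (liftZ ν, 0) f⟫_ℂ = ⟪f, W (liftZ (ν - μ), 0) f⟫_ℂ := by
        rw [hW.inner_map_left, Prod.neg_mk, neg_zero, ← mul_apply_eq_comp, hA]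
    _ = ⟪f, (weylProj N W * (W (liftZ (ν - μ), 0) * weylProj N W)) f⟫_ℂ := by
        rw [mul_apply_eq_comp, mul_apply_eq_comp, ← hW.inner_weylProj_left, hf]
    _ = if μ = ν then 1 else 0 := by
        rw [hW.weylProj_mul_map_fst_mul_weylProj]
        by_cases hμν : μ = ν
        · simp [hμν, hf, inner_self_eq_norm_sq_to_K, hf₁]
        · simp [hμν, sub_eq_zero, Ne.symm hμν]

lemma exists_orthonormal_map_apply_eq [Nontrivial E] (hW : IsWeylSystem N W) :
    ∃ w : (Fin g → ZMod N) → E, Orthonormal ℂ w ∧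
      ∀ x μ, W x (w μ) = schCoeff g N x.1 x.2 μ • w (μ + modN N x.1) := by
  obtain ⟨f, hf₁, hf⟩ := hW.exists_norm_eq_one_weylProj_apply
  refine ⟨fun μ => W (liftZ μ, 0) f, hW.orthonormal_map_fst hf₁ hf, fun x μ => ?_⟩
  simpa [mul_apply_eq_comp, hf] using congr($(hW.map_mul_map_fst_mul_weylProj x μ) f)

theorem exists_linearIsometryEquiv_intertwining (hW : IsWeylSystem N W)
    (hE : Module.finrank ℂ E = N ^ g) :
    ∃ U : ThetaSp g N ≃ₗᵢ[ℂ] E, ∀ x v, U (schOp g N x v) = W x (U v) := by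
  have : Nontrivial E :=
    Module.nontrivial_of_finrank_pos (by rw [hE]; exact pow_pos (NeZero.pos N) g)
  obtain ⟨w, hw, hWw⟩ := hW.exists_orthonormal_map_apply_eq
  let B := (basisOfOrthonormalOfCardEqFinrank hw (by simp [hE])).toOrthonormalBasis
    (by simpa using hw)
  have hB : ∀ μ, B.repr.symm (EuclideanSpace.single μ 1) = w μ := by
    simp [B, OrthonormalBasis.repr_symm_single]
  refine ⟨B.repr.symm, fun x v => ?_⟩
  let U : ThetaSp g N →L[ℂ] E := B.repr.symm.toContinuousLinearEquiv
  have hU : U.comp (schOp g N x) = (W x).comp U :=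
    ThetaSp.continuousLinearMap_ext fun μ => by simp [U, schOp_single, hB, hWw]
  exact congr($hU v)

end IsWeylSystem

end

/-- **Existence of the Hermite–Jacobi action via the exact Egorov identity.** For any
automorphism `h` of `ℤ^g × ℤ^g` preserving the standard symplectic form there is a unitary
operator `ρ(h)` on `V` with `ρ(h) ∘ O_{pq} ∘ ρ(h)⁻¹ = O_{h(p,q)}` for all `p, q ∈ ℤ^g`. -/
theorem stmt_6 (g N : ℕ) [NeZero N] (hN : Even N)
    (h : HVec g ≃+ HVec g)
    (hsymp : ∀ x y : HVec g, symp g (h x) (h y) = symp g x y) :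
    ∃ U : ThetaSp g N ≃ₗᵢ[ℂ] ThetaSp g N,
      ∀ (p q : Fin g → ℤ) (f : ThetaSp g N),
        U (Opq g N p q (U.symm f)) = Opq g N (h (p, q)).1 (h (p, q)).2 f := by
  obtain ⟨U, hU⟩ := ((isWeylSystem_schOp hN).comp_symplectic h.toAddMonoidHom hsymp)
    |>.exists_linearIsometryEquiv_intertwining (by simp)
  exact ⟨U, fun p q f => by simpa [schOp] using hU (p, q) (U.symm f)⟩
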